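/- arXiv:1311.4914 — 6 statements merged into one kernel-verified Lean document; each statement's English description precedes it below -/
import Mathlib

section
/- Let A,B,C₁,C₂ ∈ SL(2,ℂ) with [A,B]·C₁·C₂ = Id and with C₁ and C₂ each conjugate in SL(2,ℂ) to J₊. Suppose P ∈ SL(2,ℂ), P ≠ Id and P ≠ −Id, commutes with each of A, B, C₁, C₂. Then [A,B] = Id and C₁ = C₂⁻¹; moreover, for any Q ∈ SL(2,ℂ) with C₂ = Q·J₊·Q⁻¹, one has P ∈ Q·(U ∪ (−U))·Q⁻¹ and A, B ∈ Q·(U ∪ (−U))·Q⁻¹. -/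
/-!
Conjugating by `Q`, the matrix `C₂` becomes `J₊`, whose centralizer in `SL(2,ℂ)` is `±U`.
Hence `Q⁻¹PQ` lies in `±U` and, being `≠ ±Id`, is `±` a nontrivial unipotent, whose centralizer
is again `±U`. So `Q⁻¹AQ` and `Q⁻¹BQ` lie in the abelian group `±U`: `A` and `B` commute, and
then `C₁C₂ = Id`.
-/

open Matrix
open scoped commutatorElement

abbrev SL2C := Matrix.SpecialLinearGroup (Fin 2) ℂ

instance : Fact (Even (Fintype.card (Fin 2))) := ⟨by decide⟩

def Jp : SL2C := ⟨!![1, 1; 0, 1], by norm_num [Matrix.det_fin_two_of]⟩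

/-- The unipotent subgroup `U` of upper triangular matrices with 1's on the diagonal. -/
def Uset : Set SL2C := {V | ∃ y : ℂ, (V : Matrix (Fin 2) (Fin 2) ℂ) = !![1, y; 0, 1]}

/-- `−U = {−V : V ∈ U}`. -/
def negUset : Set SL2C := (fun V => -V) '' Uset

lemma mem_Uset_union_negUset_iff {X : SL2C} :
    X ∈ Uset ∪ negUset ↔ X 1 0 = 0 ∧ X 0 0 = X 1 1 := by
  constructor
  · rintro (⟨y, hy⟩ | ⟨V, ⟨y, hy⟩, rfl⟩) <;> simp [hy]
  · rintro ⟨hc, ha⟩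
    have hdet := X.2
    rw [det_fin_two, hc, ha] at hdet
    rcases mul_self_eq_one_iff.mp (by linear_combination hdet) with h1 | h1
    · refine Or.inl ⟨X 0 1, ?_⟩
      ext i j
      fin_cases i <;> fin_cases j <;> simp [hc, ha, h1]
    · refine Or.inr ⟨-X, ⟨-X 0 1, ?_⟩, neg_neg X⟩
      ext i j
      fin_cases i <;> fin_cases j <;> simp [hc, ha, h1]

lemma commute_of_mem_Uset_union_negUset {X Y : SL2C} (hX : X ∈ Uset ∪ negUset)
    (hY : Y ∈ Uset ∪ negUset) : Commute X Y := by
  rw [mem_Uset_union_negUset_iff] at hX hY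
  ext i j
  fin_cases i <;> fin_cases j <;> simp [mul_apply, hX, hY] <;> ring

lemma mem_Uset_union_negUset_of_commute_unipotent {X V : SL2C} {y : ℂ} (hy : y ≠ 0)
    (hV : (V : Matrix (Fin 2) (Fin 2) ℂ) = !![1, y; 0, 1]) (h : Commute X V) :
    X ∈ Uset ∪ negUset := by
  have hXV := congrArg Subtype.val h.eq
  have hc : X 1 0 = 0 := by simpa [hV, mul_apply, hy] using congrFun (congrFun hXV 0) 0
  have ha : X 0 0 * y + X 0 1 = X 0 1 + y * X 1 1 := by
    simpa [hV, mul_apply] using congrFun (congrFun hXV 0) 1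
  exact mem_Uset_union_negUset_iff.mpr ⟨hc, mul_right_cancel₀ hy (by linear_combination ha)⟩

lemma mem_Uset_union_negUset_of_commute {N X : SL2C} (hN : N ∈ Uset ∪ negUset) (hN1 : N ≠ 1)
    (hN2 : N ≠ -1) (h : Commute X N) : X ∈ Uset ∪ negUset := by
  rcases hN with ⟨y, hy⟩ | ⟨V, ⟨y, hy⟩, rfl⟩
  · refine mem_Uset_union_negUset_of_commute_unipotent ?_ hy h
    rintro rfl
    exact hN1 (Subtype.ext (hy.trans one_fin_two.symm))
  · refine mem_Uset_union_negUset_of_commute_unipotent ?_ hy (Commute.neg_right_iff.mp h)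
    rintro rfl
    exact hN2 (by rw [show V = 1 from Subtype.ext (hy.trans one_fin_two.symm)])

lemma conj_mem_Uset_union_negUset_of_commute {P C M Q : SL2C} (hP1 : P ≠ 1) (hP2 : P ≠ -1)
    (hPC : Commute P C) (hQ : C = Q * Jp * Q⁻¹) (hPM : Commute P M) :
    Q⁻¹ * M * Q ∈ Uset ∪ negUset := by
  have hPJp : Commute (Q⁻¹ * P * Q) Jp := by
    simpa [hQ, mul_assoc] using (hPC.conj Q⁻¹)
  have hP : Q⁻¹ * P * Q ∈ Uset ∪ negUset :=
    mem_Uset_union_negUset_of_commute_unipotent one_ne_zero rfl hPJp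
  have conj_ne {g : SL2C} (hg : P ≠ Q * g * Q⁻¹) : Q⁻¹ * P * Q ≠ g := by
    rintro rfl
    exact hg (by group)
  refine mem_Uset_union_negUset_of_commute hP (conj_ne (by simpa using hP1))
    (conj_ne (by simpa using hP2)) ?_
  simpa using (hPM.conj Q⁻¹).symm

theorem stmt3_general (A B C₁ C₂ : SL2C)
    (h : ⁅A, B⁆ * C₁ * C₂ = 1)
    (hC₂ : IsConj Jp C₂)
    (P : SL2C) (hP1 : P ≠ 1) (hP2 : P ≠ -1)
    (hPA : P * A = A * P) (hPB : P * B = B * P)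
    (hPC₂ : P * C₂ = C₂ * P) :
    ⁅A, B⁆ = 1 ∧ C₁ = C₂⁻¹ ∧
    ∀ Q : SL2C, C₂ = Q * Jp * Q⁻¹ →
      ((∃ V ∈ Uset ∪ negUset, P = Q * V * Q⁻¹) ∧
       (∃ V ∈ Uset ∪ negUset, A = Q * V * Q⁻¹) ∧
       (∃ V ∈ Uset ∪ negUset, B = Q * V * Q⁻¹)) := by
  have conj_mem {Q M : SL2C} (hQ : C₂ = Q * Jp * Q⁻¹) (hM : Commute P M) :
      Q⁻¹ * M * Q ∈ Uset ∪ negUset :=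
    conj_mem_Uset_union_negUset_of_commute hP1 hP2 hPC₂ hQ hM
  obtain ⟨q, hq⟩ := isConj_iff.mp hC₂
  have hAB : Commute A B := by
    simpa [mul_assoc] using (commute_of_mem_Uset_union_negUset (conj_mem hq.symm hPA)
      (conj_mem hq.symm hPB)).conj q
  have hcomm : ⁅A, B⁆ = 1 := commutatorElement_eq_one_iff_commute.mpr hAB
  refine ⟨hcomm, eq_inv_of_mul_eq_one_left (by simpa [hcomm] using h), fun Q hQ => ?_⟩
  have conj_form {M : SL2C} (hM : Commute P M) : ∃ V ∈ Uset ∪ negUset, M = Q * V * Q⁻¹ :=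
    ⟨_, conj_mem hQ hM, by group⟩
  exact ⟨conj_form (Commute.refl P), conj_form hPA, conj_form hPB⟩

/-- If `[A,B]·C₁·C₂ = Id` with `C₁, C₂` conjugate to `J₊`, and some `P ≠ ±Id` commutes with
`A, B, C₁, C₂`, then `[A,B] = Id`, `C₁ = C₂⁻¹`, and for any `Q` with `C₂ = Q·J₊·Q⁻¹`
one has `P, A, B ∈ Q·(U ∪ (−U))·Q⁻¹`. -/
theorem stmt3 (A B C₁ C₂ : SL2C)
    (h : ⁅A, B⁆ * C₁ * C₂ = 1)
    (hC₁ : IsConj Jp C₁) (hC₂ : IsConj Jp C₂)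
    (P : SL2C) (hP1 : P ≠ 1) (hP2 : P ≠ -1)
    (hPA : P * A = A * P) (hPB : P * B = B * P)
    (hPC₁ : P * C₁ = C₁ * P) (hPC₂ : P * C₂ = C₂ * P) :
    ⁅A, B⁆ = 1 ∧ C₁ = C₂⁻¹ ∧
    ∀ Q : SL2C, C₂ = Q * Jp * Q⁻¹ →
      ((∃ V ∈ Uset ∪ negUset, P = Q * V * Q⁻¹) ∧
       (∃ V ∈ Uset ∪ negUset, A = Q * V * Q⁻¹) ∧
       (∃ V ∈ Uset ∪ negUset, B = Q * V * Q⁻¹)) :=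
  stmt3_general A B C₁ C₂ h hC₂ P hP1 hP2 hPA hPB hPC₂
end

section
/- Let P ∈ SL(2,ℂ) have rows (x,y) and (z,w). (i) If z = 0 and x ≠ 1, x ≠ −1, then [P,J₊] is conjugate in SL(2,ℂ) to J₊. (ii) If z = 2i or z = −2i, then [P,J₊] is conjugate in SL(2,ℂ) to J₋. -/
open Matrix Complex
open scoped commutatorElement

def Jm : SL2C := ⟨!![-1, 1; 0, -1], by norm_num [Matrix.det_fin_two_of]⟩

/-! A direct computation gives `[P, J₊] = [[1 - xz, x² + xz - 1], [-z², z² + 1 + xz]]`, of trace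
`z² + 2`. For `z = 0` this is the unipotent `[[1, x² - 1], [0, 1]]` with `x² ≠ 1`, conjugate to `J₊`
by a diagonal matrix `diag(s, s⁻¹)` with `s² = x² - 1`. For `z = ±2i` the trace is `-2` and the
lower left entry `-z² = 4` is nonzero, so the commutator is a nontrivial parabolic element with
eigenvalue `-1`, conjugate to `J₋` by a Jordan basis. -/

lemma coe_Jp : (Jp : Matrix (Fin 2) (Fin 2) ℂ) = !![1, 1; 0, 1] := rfl

lemma coe_Jm : (Jm : Matrix (Fin 2) (Fin 2) ℂ) = !![-1, 1; 0, -1] := rfl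

lemma Matrix.SpecialLinearGroup.isConj_of_mul_eq_mul {n R : Type*} [Fintype n] [DecidableEq n]
    [CommRing R] {A B : SpecialLinearGroup n R} (Q : SpecialLinearGroup n R)
    (h : (Q : Matrix n n R) * A = B * Q) : IsConj A B :=
  ⟨toUnits Q, Subtype.ext h⟩

lemma coe_commutator_Jp (P : SL2C) (x y z w : ℂ)
    (hP : (P : Matrix (Fin 2) (Fin 2) ℂ) = !![x, y; z, w]) :
    ((⁅P, Jp⁆ : SL2C) : Matrix (Fin 2) (Fin 2) ℂ) =
      !![1 - x * z, x ^ 2 + x * z - 1; -z ^ 2, z ^ 2 + 1 + x * z] := by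
  have hdet : x * w - y * z = 1 := by simpa [hP, det_fin_two_of] using P.2
  rw [commutatorElement_def]
  simp only [Matrix.SpecialLinearGroup.coe_mul, Matrix.SpecialLinearGroup.coe_inv, hP, coe_Jp,
    adjugate_fin_two_of, mul_fin_two]
  ext i j
  fin_cases i <;> fin_cases j <;> simp <;> grind

lemma isConj_Jp_of_coe_eq {M : SL2C} {b : ℂ} (hb : b ≠ 0)
    (hM : (M : Matrix (Fin 2) (Fin 2) ℂ) = !![1, b; 0, 1]) : IsConj Jp M := by
  obtain ⟨s, rfl⟩ := IsAlgClosed.exists_pow_nat_eq b two_pos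
  have hs : s ≠ 0 := by rintro rfl; simp at hb
  refine SpecialLinearGroup.isConj_of_mul_eq_mul
    ⟨!![s, 0; 0, s⁻¹], by simp [det_fin_two_of, hs]⟩ ?_
  simp only [hM, coe_Jp, mul_fin_two]
  ext i j
  fin_cases i <;> fin_cases j <;> simp [sq, hs]

lemma isConj_Jm_of_coe_eq {M : SL2C} {a b c d : ℂ} (hc : c ≠ 0) (htr : a + d = -2)
    (hM : (M : Matrix (Fin 2) (Fin 2) ℂ) = !![a, b; c, d]) : IsConj Jm M := by
  obtain rfl : d = -2 - a := by linear_combination htr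
  have hdet : a * (-2 - a) - b * c = 1 := by simpa [hM, det_fin_two_of] using M.2
  obtain ⟨s, hs⟩ := IsAlgClosed.exists_pow_nat_eq (-c⁻¹) two_pos
  have hsc : s ^ 2 * c = -1 := by rw [hs]; field_simp
  -- Jordan basis `(M + 1) u, u` for `u = (s, 0)`, with `s` chosen to make the determinant 1
  refine SpecialLinearGroup.isConj_of_mul_eq_mul ⟨!![s * (a + 1), s; s * c, 0], by
    simp [det_fin_two_of]; linear_combination -hsc⟩ ?_
  simp only [hM, coe_Jm, mul_fin_two]
  ext i j
  fin_cases i <;> fin_cases j <;> simp <;> grind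

/-- For `P ∈ SL(2,ℂ)` with rows `(x,y)`, `(z,w)`:
(i) if `z = 0` and `x ≠ ±1` then `[P,J₊] ∼ J₊`;
(ii) if `z = ±2i` then `[P,J₊] ∼ J₋`. -/
theorem stmt10 (P : SL2C) (x y z w : ℂ)
    (hP : (P : Matrix (Fin 2) (Fin 2) ℂ) = !![x, y; z, w]) :
    (z = 0 → x ≠ 1 → x ≠ -1 → IsConj Jp ⁅P, Jp⁆) ∧
    ((z = 2 * I ∨ z = -(2 * I)) → IsConj Jm ⁅P, Jp⁆) := by
  have hC := coe_commutator_Jp P x y z w hP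
  constructor
  · rintro rfl hx₁ hx₂
    have hx : x ^ 2 - 1 ≠ 0 := sub_ne_zero.mpr (sq_ne_one_iff.mpr ⟨hx₁, hx₂⟩)
    exact isConj_Jp_of_coe_eq hx (by simpa using hC)
  · intro hz
    have hz₂ : z ^ 2 = -4 := by
      rcases hz with rfl | rfl <;> linear_combination 4 * I_sq
    have hz₀ : z ≠ 0 := by rintro rfl; norm_num at hz₂
    exact isConj_Jm_of_coe_eq (neg_ne_zero.mpr (pow_ne_zero 2 hz₀)) (by linear_combination hz₂) hC
end

section
/- Let λ ∈ ℂ with λ ≠ 0, 1, −1, and let D be the diagonal matrix with diagonal entries λ⁻¹ and λ. Let A, B ∈ SL(2,ℂ) and let P ∈ SL(2,ℂ) have rows (x,y) and (z,w). Suppose [A,B]·[P,J₊] = D·J₊⁻¹. Then, writing [A,B] as the matrix with rows (a,b) and (c,d), one has a = λ⁻¹(1 + xz), b = −λ⁻¹x², c = λz², d = λ(1 − xz), and hence Tr([A,B]) = λ + λ⁻¹ − xz(λ − λ⁻¹). -/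
open Matrix
open scoped commutatorElement

/-- `D = diag(λ⁻¹, λ)` as an element of SL(2,ℂ), for `λ ≠ 0`. -/
noncomputable def Dmat (l : ℂ) (hl : l ≠ 0) : SL2C :=
  ⟨!![l⁻¹, 0; 0, l], by simp [Matrix.det_fin_two_of, inv_mul_cancel₀ hl]⟩

/-! The relation collapses to `[A,B] = D · P J₊⁻¹ P⁻¹`, because `J₊⁻¹ [P,J₊]⁻¹ = P J₊⁻¹ P⁻¹`.
Since `J₊⁻¹ = 1 - e₁₂` and `P e₁₂ P⁻¹` is the rank-one matrix `(x, z)ᵀ (-z, x)`, the conjugate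
`P J₊⁻¹ P⁻¹` has rows `(1 + xz, -x²)` and `(z², 1 - xz)`; multiplying by `D` scales its rows
by `λ⁻¹` and `λ`. -/

theorem eq_mul_conj_inv_of_mul_commutatorElement_eq {G : Type*} [Group G] {c d p j : G}
    (h : c * ⁅p, j⁆ = d * j⁻¹) : c = d * (p * j⁻¹ * p⁻¹) := by
  rw [← mul_inv_eq_iff_eq_mul.mpr h.symm, commutatorElement_def]
  group

theorem Matrix.mul_unipotent_mul_adjugate_fin_two {R : Type*} [CommRing R] {x y z w : R}
    (hdet : x * w - y * z = 1) :
    !![x, y; z, w] * !![1, -1; 0, 1] * adjugate !![x, y; z, w]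
      = !![1 + x * z, -x ^ 2; z ^ 2, 1 - x * z] := by
  rw [adjugate_fin_two_of, mul_fin_two, mul_fin_two]
  ext i j
  fin_cases i <;> fin_cases j <;>
    simp only [Fin.zero_eta, Fin.mk_one, of_apply, cons_val', cons_val_zero, cons_val_one,
      cons_val_fin_one]
  · linear_combination hdet
  · ring
  · ring
  · linear_combination hdet

theorem coe_mul_Jp_inv_mul_inv {P : SL2C} {x y z w : ℂ}
    (hP : (P : Matrix (Fin 2) (Fin 2) ℂ) = !![x, y; z, w]) :
    ((P * Jp⁻¹ * P⁻¹ : SL2C) : Matrix (Fin 2) (Fin 2) ℂ)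
      = !![1 + x * z, -x ^ 2; z ^ 2, 1 - x * z] := by
  have hdet : x * w - y * z = 1 := by simpa [hP, det_fin_two_of] using P.det_coe
  have hJ : ((Jp⁻¹ : SL2C) : Matrix (Fin 2) (Fin 2) ℂ) = !![1, -1; 0, 1] := by
    rw [Matrix.SpecialLinearGroup.coe_inv, Jp, adjugate_fin_two_of]
    simp
  simp only [Matrix.SpecialLinearGroup.coe_mul, Matrix.SpecialLinearGroup.coe_inv, hJ, hP]
  exact mul_unipotent_mul_adjugate_fin_two hdet

theorem coe_Dmat_mul {l : ℂ} (hl : l ≠ 0) {M : SL2C} {a b c d : ℂ}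
    (hM : (M : Matrix (Fin 2) (Fin 2) ℂ) = !![a, b; c, d]) :
    ((Dmat l hl * M : SL2C) : Matrix (Fin 2) (Fin 2) ℂ) = !![l⁻¹ * a, l⁻¹ * b; l * c, l * d] := by
  rw [Matrix.SpecialLinearGroup.coe_mul, hM, Dmat, mul_fin_two]
  simp

theorem stmt11_general (l : ℂ) (hl0 : l ≠ 0)
    (A B P : SL2C) (x y z w : ℂ)
    (hP : (P : Matrix (Fin 2) (Fin 2) ℂ) = !![x, y; z, w])
    (h : ⁅A, B⁆ * ⁅P, Jp⁆ = Dmat l hl0 * Jp⁻¹) :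
    ((⁅A, B⁆ : SL2C) : Matrix (Fin 2) (Fin 2) ℂ) 0 0 = l⁻¹ * (1 + x * z) ∧
    ((⁅A, B⁆ : SL2C) : Matrix (Fin 2) (Fin 2) ℂ) 0 1 = -l⁻¹ * x ^ 2 ∧
    ((⁅A, B⁆ : SL2C) : Matrix (Fin 2) (Fin 2) ℂ) 1 0 = l * z ^ 2 ∧
    ((⁅A, B⁆ : SL2C) : Matrix (Fin 2) (Fin 2) ℂ) 1 1 = l * (1 - x * z) ∧
    Matrix.trace ((⁅A, B⁆ : SL2C) : Matrix (Fin 2) (Fin 2) ℂ)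
      = l + l⁻¹ - x * z * (l - l⁻¹) := by
  have hM : ((⁅A, B⁆ : SL2C) : Matrix (Fin 2) (Fin 2) ℂ)
      = !![l⁻¹ * (1 + x * z), l⁻¹ * -x ^ 2; l * z ^ 2, l * (1 - x * z)] := by
    rw [eq_mul_conj_inv_of_mul_commutatorElement_eq h]
    exact coe_Dmat_mul hl0 (coe_mul_Jp_inv_mul_inv hP)
  refine ⟨?_, ?_, ?_, ?_, ?_⟩ <;> simp only [hM, trace_fin_two_of, of_apply, cons_val',
    cons_val_zero, cons_val_one, empty_val', cons_val_fin_one] <;> ring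

/-- If `[A,B]·[P,J₊] = D·J₊⁻¹` with `D = diag(λ⁻¹,λ)`, `λ ≠ 0,±1`, and `P` has rows
`(x,y),(z,w)`, then the entries `a,b,c,d` of `[A,B]` are
`a = λ⁻¹(1+xz)`, `b = −λ⁻¹x²`, `c = λz²`, `d = λ(1−xz)`, and
`Tr([A,B]) = λ + λ⁻¹ − xz(λ − λ⁻¹)`. -/
theorem stmt11 (l : ℂ) (hl0 : l ≠ 0) (hl1 : l ≠ 1) (hl2 : l ≠ -1)
    (A B P : SL2C) (x y z w : ℂ)
    (hP : (P : Matrix (Fin 2) (Fin 2) ℂ) = !![x, y; z, w])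
    (h : ⁅A, B⁆ * ⁅P, Jp⁆ = Dmat l hl0 * Jp⁻¹) :
    ((⁅A, B⁆ : SL2C) : Matrix (Fin 2) (Fin 2) ℂ) 0 0 = l⁻¹ * (1 + x * z) ∧
    ((⁅A, B⁆ : SL2C) : Matrix (Fin 2) (Fin 2) ℂ) 0 1 = -l⁻¹ * x ^ 2 ∧
    ((⁅A, B⁆ : SL2C) : Matrix (Fin 2) (Fin 2) ℂ) 1 0 = l * z ^ 2 ∧
    ((⁅A, B⁆ : SL2C) : Matrix (Fin 2) (Fin 2) ℂ) 1 1 = l * (1 - x * z) ∧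
    Matrix.trace ((⁅A, B⁆ : SL2C) : Matrix (Fin 2) (Fin 2) ℂ)
      = l + l⁻¹ - x * z * (l - l⁻¹) :=
  stmt11_general l hl0 A B P x y z w hP h
end

section
/- Let λ, μ ∈ ℂ with λ ≠ 0, 1, −1 and μ ≠ 0. Let a, b, c, d ∈ ℂ satisfy ad − bc = 1, bc ≠ 0, and (aμ⁻¹ − 1) + λ²(dμ − 1) = 0. Then a quadruple (x,y,z,w) ∈ ℂ⁴ satisfies the five equations xw − λ⁻²yz = dμ, xy(1 − λ²) = −bμ⁻¹, zw(1 − λ⁻²) = −cμ, xw − λ²yz = aμ⁻¹, xw − yz = 1 if and only if x ≠ 0, y = −μ⁻¹b/(x(1 − λ²)), z = (μ − a)x/b, and w = (μ⁻¹a − λ²)/((1 − λ²)x). In particular the solution set is in bijection with ℂ* via (x,y,z,w) ↦ x. -/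
/-!
All five equations only involve `λ²`, written `L` below. Subtracting the fourth equation from
the fifth gives `(1 - L) y z = a μ⁻¹ - 1`, so the second, fourth and fifth equations already
force `x ≠ 0` and determine `y`, `xw` and `yz`, hence `y`, `z`, `w`, as functions of `x`.
Conversely the parametrised quadruple satisfies the second, fourth and fifth equations
identically; the first reduces to the trace relation and the third, given that, to
`ad - bc = 1`.
-/

section Fibre

variable {K : Type*} [Field K] {L m a b c d x y z w : K}

theorem fibre_param_of_eqs (hb : b ≠ 0) (hm : m ≠ 0) (hL : 1 - L ≠ 0)
    (h2 : x * y * (1 - L) = -b * m⁻¹) (h4 : x * w - L * y * z = a * m⁻¹)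
    (h5 : x * w - y * z = 1) :
    x ≠ 0 ∧ y = -m⁻¹ * b / (x * (1 - L)) ∧ z = (m - a) * x / b ∧
      w = (m⁻¹ * a - L) / ((1 - L) * x) := by
  have hx : x ≠ 0 := by
    rintro rfl
    exact mul_ne_zero (neg_ne_zero.2 hb) (inv_ne_zero hm) (by simpa using h2.symm)
  have hmm : m * m⁻¹ = 1 := mul_inv_cancel₀ hm
  refine ⟨hx, ?_, ?_, ?_⟩
  · rw [eq_div_iff (mul_ne_zero hx hL)]
    linear_combination h2
  · rw [eq_div_iff hb]
    linear_combination m * z * h2 - m * x * (h4 - h5) - (b * z + a * x) * hmm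
  · rw [eq_div_iff (mul_ne_zero hL hx)]
    linear_combination h4 - L * h5

theorem eqs_of_fibre_param (hL0 : L ≠ 0) (hL : 1 - L ≠ 0) (hm : m ≠ 0) (hb : b ≠ 0)
    (hdet : a * d - b * c = 1) (htr : (a * m⁻¹ - 1) + L * (d * m - 1) = 0) (hx : x ≠ 0)
    (hy : y = -m⁻¹ * b / (x * (1 - L))) (hz : z = (m - a) * x / b)
    (hw : w = (m⁻¹ * a - L) / ((1 - L) * x)) :
    x * w - L⁻¹ * y * z = d * m ∧ x * y * (1 - L) = -b * m⁻¹ ∧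
      z * w * (1 - L⁻¹) = -c * m ∧ x * w - L * y * z = a * m⁻¹ ∧ x * w - y * z = 1 := by
  have htr' : a + L * d * m ^ 2 = m + L * m := by
    field_simp at htr
    linear_combination htr
  subst hy hz hw
  refine ⟨?_, ?_, ?_, ?_, ?_⟩
  · field_simp
    linear_combination (L - 1) * htr'
  · field_simp
  · field_simp
    linear_combination (1 - L) * a * htr' - (1 - L) * L * m ^ 2 * hdet
  · field_simp
    ring
  · field_simp
    ring

theorem fibre_eqs_iff (hL0 : L ≠ 0) (hL : 1 - L ≠ 0) (hm : m ≠ 0) (hb : b ≠ 0)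
    (hdet : a * d - b * c = 1) (htr : (a * m⁻¹ - 1) + L * (d * m - 1) = 0) :
    (x * w - L⁻¹ * y * z = d * m ∧ x * y * (1 - L) = -b * m⁻¹ ∧
      z * w * (1 - L⁻¹) = -c * m ∧ x * w - L * y * z = a * m⁻¹ ∧ x * w - y * z = 1) ↔
    (x ≠ 0 ∧ y = -m⁻¹ * b / (x * (1 - L)) ∧ z = (m - a) * x / b ∧
      w = (m⁻¹ * a - L) / ((1 - L) * x)) :=
  ⟨fun ⟨_, h2, _, h4, h5⟩ => fibre_param_of_eqs hb hm hL h2 h4 h5,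
    fun ⟨hx, hy, hz, hw⟩ => eqs_of_fibre_param hL0 hL hm hb hdet htr hx hy hz hw⟩

end Fibre

theorem exists_equiv_units_of_forall_iff_graph {K β : Type*} [GroupWithZero K]
    {P : K × β → Prop} (f : K → β) (hP : ∀ x q, P (x, q) ↔ x ≠ 0 ∧ q = f x) :
    ∃ e : {p // P p} ≃ Kˣ, ∀ p, (e p : K) = p.1.1 := by
  refine ⟨{ toFun := fun p => Units.mk0 p.1.1 ((hP _ _).1 p.2).1
            invFun := fun u => ⟨(u, f u), (hP _ _).2 ⟨u.ne_zero, rfl⟩⟩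
            left_inv := ?_
            right_inv := fun u => Units.ext rfl }, fun _ => rfl⟩
  rintro ⟨⟨x, q⟩, hp⟩
  obtain ⟨-, rfl⟩ := (hP x q).1 hp
  rfl

/-- (Generic fibre of Theorem 5.4(1).) With `λ ≠ 0,±1`, `μ ≠ 0`, `ad − bc = 1`, `bc ≠ 0`
and the trace relation, the solutions `(x,y,z,w)` of the five equations are exactly those
with `x ≠ 0` and `y, z, w` given by the stated formulas; hence the solution set is in
bijection with `ℂ*` via `(x,y,z,w) ↦ x`. -/
theorem stmt16 (l m : ℂ) (hl0 : l ≠ 0) (hl1 : l ≠ 1) (hl2 : l ≠ -1) (hm : m ≠ 0)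
    (a b c d : ℂ)
    (hdet : a * d - b * c = 1)
    (hbc : b * c ≠ 0)
    (htr : (a * m⁻¹ - 1) + l ^ 2 * (d * m - 1) = 0) :
    (∀ x y z w : ℂ,
      ((x * w - (l ^ 2)⁻¹ * y * z = d * m ∧
        x * y * (1 - l ^ 2) = -b * m⁻¹ ∧
        z * w * (1 - (l ^ 2)⁻¹) = -c * m ∧
        x * w - l ^ 2 * y * z = a * m⁻¹ ∧
        x * w - y * z = 1) ↔
       (x ≠ 0 ∧ y = -m⁻¹ * b / (x * (1 - l ^ 2)) ∧
        z = (m - a) * x / b ∧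
        w = (m⁻¹ * a - l ^ 2) / ((1 - l ^ 2) * x)))) ∧
    ∃ e : {p : ℂ × ℂ × ℂ × ℂ //
            p.1 * p.2.2.2 - (l ^ 2)⁻¹ * p.2.1 * p.2.2.1 = d * m ∧
            p.1 * p.2.1 * (1 - l ^ 2) = -b * m⁻¹ ∧
            p.2.2.1 * p.2.2.2 * (1 - (l ^ 2)⁻¹) = -c * m ∧
            p.1 * p.2.2.2 - l ^ 2 * p.2.1 * p.2.2.1 = a * m⁻¹ ∧
            p.1 * p.2.2.2 - p.2.1 * p.2.2.1 = 1} ≃ ℂˣ,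
      ∀ p, (e p : ℂ) = p.1.1 := by
  have hb : b ≠ 0 := left_ne_zero_of_mul hbc
  have hL : 1 - l ^ 2 ≠ 0 := sub_ne_zero.2 fun h => by
    rcases sq_eq_one_iff.1 h.symm with h | h <;> contradiction
  have key x y z w := fibre_eqs_iff (x := x) (y := y) (z := z) (w := w)
    (pow_ne_zero 2 hl0) hL hm hb hdet htr
  refine ⟨key, exists_equiv_units_of_forall_iff_graph
    (fun x => (-m⁻¹ * b / (x * (1 - l ^ 2)), (m - a) * x / b,
      (m⁻¹ * a - l ^ 2) / ((1 - l ^ 2) * x))) fun x ⟨y, z, w⟩ => ?_⟩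
  simpa only [Prod.mk.injEq] using key x y z w
end

section
/- Let λ, μ ∈ ℂ with λ ≠ 0, 1, −1 and μ ≠ 0. Let a, b, c, d ∈ ℂ with a = μ, d = μ⁻¹, and bc = 0. Then a quadruple (x,y,z,w) ∈ ℂ⁴ satisfies the five equations xw − λ⁻²yz = dμ, xy(1 − λ²) = −bμ⁻¹, zw(1 − λ⁻²) = −cμ, xw − λ²yz = aμ⁻¹, xw − yz = 1 if and only if x ≠ 0, w = x⁻¹, y = −bμ⁻¹/(x(1 − λ²)), and z = −cμx/(1 − λ⁻²). -/
/-!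
Subtracting the last equation from the first gives `(1 - λ⁻²) y z = 0`, so `y z = 0` and `x w = 1`;
the second and third equations then solve for `y` and `z`. Conversely, for the stated `y, z`
the product `y z` is a multiple of `b c = 0`, and the five equations reduce to `x w = 1`.
-/

namespace CommutatorSystem

variable {K : Type*} [Field K] {t β γ x y z w : K}

theorem one_sub_inv_ne_zero (ht : t ≠ 1) : 1 - t⁻¹ ≠ 0 :=
  sub_ne_zero.mpr fun h => ht (inv_eq_one.mp h.symm)

theorem system_iff (ht : t ≠ 1) (hβγ : β * γ = 0) :
    (x * w - t⁻¹ * y * z = 1 ∧ x * y * (1 - t) = β ∧ z * w * (1 - t⁻¹) = γ ∧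
        x * w - t * y * z = 1 ∧ x * w - y * z = 1) ↔
      (x ≠ 0 ∧ w = x⁻¹ ∧ y = β / (x * (1 - t)) ∧ z = γ * x / (1 - t⁻¹)) := by
  have hA : 1 - t ≠ 0 := sub_ne_zero.mpr ht.symm
  have hB := one_sub_inv_ne_zero ht
  constructor
  · rintro ⟨h₁, h₂, h₃, -, h₅⟩
    have hyz : y * z = 0 :=
      (mul_eq_zero.mp (by linear_combination h₁ - h₅ : (1 - t⁻¹) * (y * z) = 0)).resolve_left hB
    have hxw : x * w = 1 := by linear_combination h₅ + hyz
    have hx := left_ne_zero_of_mul_eq_one hxw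
    refine ⟨hx, eq_inv_of_mul_eq_one_right hxw, ?_, ?_⟩
    · rw [eq_div_iff (mul_ne_zero hx hA)]
      linear_combination h₂
    · rw [eq_div_iff hB]
      linear_combination x * h₃ - z * (1 - t⁻¹) * hxw
  · rintro ⟨hx, rfl, hy, hz⟩
    have hyz : y * z = 0 := by
      rw [hy, hz, show β / (x * (1 - t)) * (γ * x / (1 - t⁻¹)) = β * γ / ((1 - t) * (1 - t⁻¹))
        by field_simp, hβγ, zero_div]
    have hxw := mul_inv_cancel₀ hx
    refine ⟨?_, ?_, ?_, ?_, ?_⟩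
    · linear_combination hxw - t⁻¹ * hyz
    · rw [hy]
      field_simp
    · rw [hz, div_mul_eq_mul_div, div_mul_cancel₀ _ hB, mul_inv_cancel_right₀ hx]
    · linear_combination hxw - t * hyz
    · linear_combination hxw - hyz

end CommutatorSystem

theorem stmt17_general (l m : ℂ) (hl1 : l ≠ 1) (hl2 : l ≠ -1) (hm : m ≠ 0)
    (a b c d : ℂ)
    (ha : a = m) (hd : d = m⁻¹) (hbc : b * c = 0) :
    ∀ x y z w : ℂ,
      ((x * w - (l ^ 2)⁻¹ * y * z = d * m ∧
        x * y * (1 - l ^ 2) = -b * m⁻¹ ∧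
        z * w * (1 - (l ^ 2)⁻¹) = -c * m ∧
        x * w - l ^ 2 * y * z = a * m⁻¹ ∧
        x * w - y * z = 1) ↔
       (x ≠ 0 ∧ w = x⁻¹ ∧
        y = -b * m⁻¹ / (x * (1 - l ^ 2)) ∧
        z = -c * m * x / (1 - (l ^ 2)⁻¹))) := by
  intro x y z w
  subst a d
  rw [inv_mul_cancel₀ hm, mul_inv_cancel₀ hm]
  refine CommutatorSystem.system_iff (sq_ne_one_iff.mpr ⟨hl1, hl2⟩) ?_
  linear_combination (m⁻¹ * m) * hbc

/-- (Case `t₂ = 2` of Theorem 5.4.) With `λ ≠ 0,±1`, `μ ≠ 0`, `a = μ`, `d = μ⁻¹`, `bc = 0`,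
the solutions `(x,y,z,w)` of the five equations are exactly those with `x ≠ 0`, `w = x⁻¹`,
and `y, z` given by the stated formulas. -/
theorem stmt17 (l m : ℂ) (hl0 : l ≠ 0) (hl1 : l ≠ 1) (hl2 : l ≠ -1) (hm : m ≠ 0)
    (a b c d : ℂ)
    (ha : a = m) (hd : d = m⁻¹) (hbc : b * c = 0) :
    ∀ x y z w : ℂ,
      ((x * w - (l ^ 2)⁻¹ * y * z = d * m ∧
        x * y * (1 - l ^ 2) = -b * m⁻¹ ∧
        z * w * (1 - (l ^ 2)⁻¹) = -c * m ∧
        x * w - l ^ 2 * y * z = a * m⁻¹ ∧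
        x * w - y * z = 1) ↔
       (x ≠ 0 ∧ w = x⁻¹ ∧
        y = -b * m⁻¹ / (x * (1 - l ^ 2)) ∧
        z = -c * m * x / (1 - (l ^ 2)⁻¹))) :=
  stmt17_general l m hl1 hl2 hm a b c d ha hd hbc
end

section
/- Let λ, μ ∈ ℂ with λ ≠ 0, 1, −1 and μ ≠ 0. Let a, b, c, d ∈ ℂ with a = μλ², d = μ⁻¹λ⁻², and bc = 0. Then a quadruple (x,y,z,w) ∈ ℂ⁴ satisfies the five equations xw − λ⁻²yz = dμ, xy(1 − λ²) = −bμ⁻¹, zw(1 − λ⁻²) = −cμ, xw − λ²yz = aμ⁻¹, xw − yz = 1 if and only if y ≠ 0, z = −1/y, x = −bμ⁻¹/(y(1 − λ²)), and w = cμy/(1 − λ⁻²). -/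
/-! Since `λ² ≠ 1`, the first, fourth and fifth equations say exactly that `xw = 0` and
`yz = -1`; the second and third then determine `x` and `w` from `y`. Conversely, for `x` and `w`
given by these formulas, `xw` is a multiple of `bc = 0`. -/

section Field

variable {K : Type*} [Field K]

theorem sub_mul_eq_and_sub_eq_one_iff {s p q : K} (hs : s ≠ 1) :
    (p - s⁻¹ * q = s⁻¹ ∧ p - s * q = s ∧ p - q = 1) ↔ p = 0 ∧ q = -1 := by
  constructor
  · rintro ⟨h₁, -, h₂⟩
    have hq : (1 - s⁻¹) * (q + 1) = 0 := by linear_combination h₁ - h₂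
    have hq : q = -1 := by
      linear_combination (mul_eq_zero.1 hq).resolve_left (sub_ne_zero.2 (inv_ne_one.2 hs).symm)
    exact ⟨by linear_combination h₂ + hq, hq⟩
  · rintro ⟨rfl, rfl⟩
    refine ⟨?_, ?_, ?_⟩ <;> ring

theorem mul_eq_neg_one_iff_eq_neg_one_div {y z : K} : y * z = -1 ↔ y ≠ 0 ∧ z = -1 / y := by
  constructor
  · intro h
    have hy : y ≠ 0 := by
      rintro rfl
      simp at h
    exact ⟨hy, by rw [eq_div_iff hy]; linear_combination h⟩
  · rintro ⟨hy, rfl⟩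
    field_simp

theorem mul_mul_eq_neg_iff_eq_div {y z w k γ : K} (hyz : y * z = -1) (hk : k ≠ 0) :
    z * w * k = -γ ↔ w = γ * y / k := by
  rw [eq_div_iff hk]
  constructor
  · intro h
    linear_combination w * k * hyz - y * h
  · intro h
    linear_combination z * h + γ * hyz

end Field

theorem stmt18_general (l m : ℂ) (hl1 : l ≠ 1) (hl2 : l ≠ -1) (hm : m ≠ 0)
    (a b c d : ℂ)
    (ha : a = m * l ^ 2) (hd : d = m⁻¹ * (l ^ 2)⁻¹) (hbc : b * c = 0) :
    ∀ x y z w : ℂ,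
      ((x * w - (l ^ 2)⁻¹ * y * z = d * m ∧
        x * y * (1 - l ^ 2) = -b * m⁻¹ ∧
        z * w * (1 - (l ^ 2)⁻¹) = -c * m ∧
        x * w - l ^ 2 * y * z = a * m⁻¹ ∧
        x * w - y * z = 1) ↔
       (y ≠ 0 ∧ z = -1 / y ∧
        x = -b * m⁻¹ / (y * (1 - l ^ 2)) ∧
        w = c * m * y / (1 - (l ^ 2)⁻¹))) := by
  intro x y z w
  have hs : l ^ 2 ≠ 1 := by simp [sq_eq_one_iff, hl1, hl2]
  have hk₁ : 1 - l ^ 2 ≠ 0 := sub_ne_zero.2 hs.symm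
  have hk₂ : 1 - (l ^ 2)⁻¹ ≠ 0 := sub_ne_zero.2 (inv_ne_one.2 hs).symm
  have hdm : d * m = (l ^ 2)⁻¹ := by rw [hd]; field_simp
  have ham : a * m⁻¹ = l ^ 2 := by rw [ha]; field_simp
  simp only [hdm, ham, mul_assoc _ y z, neg_mul c m]
  constructor
  · rintro ⟨e₁, e₂, e₃, e₄, e₅⟩
    obtain ⟨-, hyz⟩ := (sub_mul_eq_and_sub_eq_one_iff hs).1 ⟨e₁, e₄, e₅⟩
    obtain ⟨hy, hz⟩ := mul_eq_neg_one_iff_eq_neg_one_div.1 hyz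
    refine ⟨hy, hz, ?_, (mul_mul_eq_neg_iff_eq_div hyz hk₂).1 e₃⟩
    rw [eq_div_iff (mul_ne_zero hy hk₁), ← mul_assoc, e₂]
  · rintro ⟨hy, hz, hx, hw⟩
    have hyz : y * z = -1 := mul_eq_neg_one_iff_eq_neg_one_div.2 ⟨hy, hz⟩
    have hxw : x * w = 0 := by
      have hnum : -b * m⁻¹ * (c * m * y) = 0 := by linear_combination -(m⁻¹ * m * y) * hbc
      rw [hx, hw, div_mul_div_comm, hnum, zero_div]
    obtain ⟨e₁, e₄, e₅⟩ := (sub_mul_eq_and_sub_eq_one_iff hs).2 ⟨hxw, hyz⟩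
    refine ⟨e₁, ?_, (mul_mul_eq_neg_iff_eq_div hyz hk₂).2 hw, e₄, e₅⟩
    rw [hx, mul_assoc, div_mul_cancel₀ _ (mul_ne_zero hy hk₁)]

/-- (Case `t₂ = λ² + λ⁻²` of Theorem 5.4.) With `λ ≠ 0,±1`, `μ ≠ 0`, `a = μλ²`,
`d = μ⁻¹λ⁻²`, `bc = 0`, the solutions `(x,y,z,w)` of the five equations are exactly those
with `y ≠ 0`, `z = −1/y`, and `x, w` given by the stated formulas. -/
theorem stmt18 (l m : ℂ) (hl0 : l ≠ 0) (hl1 : l ≠ 1) (hl2 : l ≠ -1) (hm : m ≠ 0)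
    (a b c d : ℂ)
    (ha : a = m * l ^ 2) (hd : d = m⁻¹ * (l ^ 2)⁻¹) (hbc : b * c = 0) :
    ∀ x y z w : ℂ,
      ((x * w - (l ^ 2)⁻¹ * y * z = d * m ∧
        x * y * (1 - l ^ 2) = -b * m⁻¹ ∧
        z * w * (1 - (l ^ 2)⁻¹) = -c * m ∧
        x * w - l ^ 2 * y * z = a * m⁻¹ ∧
        x * w - y * z = 1) ↔
       (y ≠ 0 ∧ z = -1 / y ∧
        x = -b * m⁻¹ / (y * (1 - l ^ 2)) ∧
        w = c * m * y / (1 - (l ^ 2)⁻¹))) :=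
  stmt18_general l m hl1 hl2 hm a b c d ha hd hbc
end
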